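/- If X is a space with countable extent of cardinality less than 𝔟 satisfying selSS*_cd(O,Γ), then X is selectively strongly star-Hurewicz. -/

import Mathlib

open Set Filter

variable {X : Type u}

def star {X : Type u} (A : Set X) (U : Set (Set X)) : Set X :=
  ⋃₀ {u ∈ U | (u ∩ A).Nonempty}

def IsOpenCover {X : Type u} [TopologicalSpace X] (U : Set (Set X)) : Prop :=
  (∀ u ∈ U, IsOpen u) ∧ ⋃₀ U = univ

noncomputable def domNum : Cardinal :=
  sInf {c | ∃ D : Set (ℕ → ℕ), Cardinal.mk D = c ∧
    ∀ f : ℕ → ℕ, ∃ g ∈ D, ∀ᶠ n in atTop, f n ≤ g n}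

noncomputable def boundNum : Cardinal :=
  sInf {c | ∃ B : Set (ℕ → ℕ), Cardinal.mk B = c ∧
    ¬ ∃ g : ℕ → ℕ, ∀ f ∈ B, ∀ᶠ n in atTop, f n ≤ g n}

noncomputable def covMeager : Cardinal :=
  sInf {c | ∃ F : Set (ℕ → ℕ), Cardinal.mk F = c ∧
    ¬ ∃ g : ℕ → ℕ, ∀ f ∈ F, {n | g n = f n}.Infinite}

def StronglyStarLindelof (X : Type u) [TopologicalSpace X] : Prop :=
  ∀ U : Set (Set X), IsOpenCover U →
    ∃ C : Set X, C.Countable ∧ star C U = univ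

def AbsStronglyStarLindelof (X : Type u) [TopologicalSpace X] : Prop :=
  ∀ U : Set (Set X), IsOpenCover U → ∀ D : Set X, Dense D →
    ∃ C : Set X, C ⊆ D ∧ C.Countable ∧ star C U = univ

def StronglyStarMenger (X : Type u) [TopologicalSpace X] : Prop :=
  ∀ U : ℕ → Set (Set X), (∀ n, IsOpenCover (U n)) →
    ∃ F : ℕ → Finset X, ⋃ n, star (↑(F n)) (U n) = univ

def AbsStronglyStarMenger (X : Type u) [TopologicalSpace X] : Prop :=
  ∀ U : ℕ → Set (Set X), (∀ n, IsOpenCover (U n)) → ∀ D : Set X, Dense D →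
    ∃ F : ℕ → Finset X, (∀ n, ↑(F n) ⊆ D) ∧ ⋃ n, star (↑(F n)) (U n) = univ

def SelStronglyStarMenger (X : Type u) [TopologicalSpace X] : Prop :=
  ∀ U : ℕ → Set (Set X), (∀ n, IsOpenCover (U n)) →
    ∀ D : ℕ → Set X, (∀ n, Dense (D n)) →
      ∃ F : ℕ → Finset X, (∀ n, ↑(F n) ⊆ D n) ∧ ⋃ n, star (↑(F n)) (U n) = univ

def StronglyStarHurewicz (X : Type u) [TopologicalSpace X] : Prop :=
  ∀ U : ℕ → Set (Set X), (∀ n, IsOpenCover (U n)) →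
    ∃ F : ℕ → Finset X, ∀ x : X, ∀ᶠ n in atTop, x ∈ star (↑(F n)) (U n)

def SelStronglyStarHurewicz (X : Type u) [TopologicalSpace X] : Prop :=
  ∀ U : ℕ → Set (Set X), (∀ n, IsOpenCover (U n)) →
    ∀ D : ℕ → Set X, (∀ n, Dense (D n)) →
      ∃ F : ℕ → Finset X, (∀ n, ↑(F n) ⊆ D n) ∧
        ∀ x : X, ∀ᶠ n in atTop, x ∈ star (↑(F n)) (U n)

def StronglyStarRothberger (X : Type u) [TopologicalSpace X] : Prop :=
  ∀ U : ℕ → Set (Set X), (∀ n, IsOpenCover (U n)) →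
    ∃ x : ℕ → X, ⋃ n, star {x n} (U n) = univ

def SelStronglyStarRothberger (X : Type u) [TopologicalSpace X] : Prop :=
  ∀ U : ℕ → Set (Set X), (∀ n, IsOpenCover (U n)) →
    ∀ D : ℕ → Set X, (∀ n, Dense (D n)) →
      ∃ d : ℕ → X, (∀ n, d n ∈ D n) ∧ ⋃ n, star {d n} (U n) = univ

def DiscreteIn {X : Type u} [TopologicalSpace X] (C : Set X) : Prop :=
  ∀ x ∈ C, ∃ O : Set X, IsOpen O ∧ O ∩ C = {x}

def CountableExtent (X : Type u) [TopologicalSpace X] : Prop :=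
  ∀ C : Set X, IsClosed C → DiscreteIn C → C.Countable

def SelSScdOGamma (X : Type u) [TopologicalSpace X] : Prop :=
  ∀ U : ℕ → Set (Set X), (∀ n, IsOpenCover (U n)) →
    ∀ D : ℕ → Set X, (∀ n, Dense (D n)) →
      ∃ C : ℕ → Set X, (∀ n, C n ⊆ D n ∧ IsClosed (C n) ∧ DiscreteIn (C n)) ∧
        ∀ x : X, ∀ᶠ n in atTop, x ∈ star (C n) (U n)

def SelSScdOO (X : Type u) [TopologicalSpace X] : Prop :=
  ∀ U : ℕ → Set (Set X), (∀ n, IsOpenCover (U n)) →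
    ∀ D : ℕ → Set X, (∀ n, Dense (D n)) →
      ∃ C : ℕ → Set X, (∀ n, C n ⊆ D n ∧ IsClosed (C n) ∧ DiscreteIn (C n)) ∧
        ⋃ n, star (C n) (U n) = univ

def StarSigmaK (X : Type u) [TopologicalSpace X] (K : Set (Set X)) : Prop :=
  ∀ U : Set (Set X), IsOpenCover U →
    ∃ E : ℕ → Set X, (∀ m, E m ∈ K) ∧ star (⋃ m, E m) U = univ

def AbsStarSigmaK (X : Type u) [TopologicalSpace X] (K : Set (Set X)) : Prop :=
  ∀ D : Set X, Dense D → ∀ U : Set (Set X), IsOpenCover U →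
    ∃ E : ℕ → Set X, (∀ m, E m ∈ K ∧ E m ⊆ D) ∧ star (⋃ m, E m) U = univ

def AbsNbhdStarMenger (X : Type u) [TopologicalSpace X] : Prop :=
  ∀ U : ℕ → Set (Set X), (∀ n, IsOpenCover (U n)) → ∀ D : Set X, Dense D →
    ∃ F : ℕ → Finset X, (∀ n, ↑(F n) ⊆ D) ∧
      ∀ O : ℕ → Set X, (∀ n, IsOpen (O n) ∧ ↑(F n) ⊆ O n) →
        ⋃ n, star (O n) (U n) = univ

def AbsNbhdStarHurewicz (X : Type u) [TopologicalSpace X] : Prop :=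
  ∀ U : ℕ → Set (Set X), (∀ n, IsOpenCover (U n)) → ∀ D : Set X, Dense D →
    ∃ F : ℕ → Finset X, (∀ n, ↑(F n) ⊆ D) ∧
      ∀ O : ℕ → Set X, (∀ n, IsOpen (O n) ∧ ↑(F n) ⊆ O n) →
        ∀ x : X, ∀ᶠ n in atTop, x ∈ star (O n) (U n)


/-!
Each selected closed discrete set `Cₙ ⊆ Dₙ` is countable by countable extent, so it is the
increasing union of finite sets `Cₙ,ₖ`. For each point `x`, let `kₓ(n)` be a stage at
which `x ∈ St(Cₙ,ₖ, Uₙ)`. Fewer than `𝔟` such functions `kₓ` are eventually dominated by a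
single `g`, and then the finite sets `Cₙ,g(n)` witness the star-Hurewicz property.
-/

theorem star_mono {A B : Set X} (hAB : A ⊆ B) (V : Set (Set X)) : star A V ⊆ star B V :=
  sUnion_mono fun _ ⟨hu, hne⟩ => ⟨hu, hne.mono (inter_subset_inter_right _ hAB)⟩

theorem star_iUnion {ι : Sort*} (A : ι → Set X) (V : Set (Set X)) :
    star (⋃ i, A i) V = ⋃ i, star (A i) V := by
  ext x
  simp only [_root_.star, mem_sUnion, mem_iUnion, mem_sep_iff, inter_iUnion, nonempty_iUnion]
  exact ⟨fun ⟨t, ⟨ht, i, hi⟩, hx⟩ => ⟨i, t, ⟨ht, hi⟩, hx⟩,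
    fun ⟨i, t, ⟨ht, hi⟩, hx⟩ => ⟨t, ⟨ht, i, hi⟩, hx⟩⟩

theorem Set.Countable.exists_monotone_finset_iUnion_eq {C : Set X} (hC : C.Countable) :
    ∃ F : ℕ → Finset X, Monotone F ∧ ⋃ k, (F k : Set X) = C := by
  classical
  rcases C.eq_empty_or_nonempty with rfl | hne
  · exact ⟨fun _ => ∅, monotone_const, by simp⟩
  obtain ⟨e, rfl⟩ := hC.exists_eq_range hne
  refine ⟨fun k => (Finset.range k).image e,
    fun _ _ hab => Finset.image_subset_image (Finset.range_mono hab), ?_⟩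
  ext x
  simp only [Finset.coe_image, Finset.coe_range, mem_iUnion, mem_image, mem_Iio, mem_range]
  exact ⟨fun ⟨_, i, _, hi⟩ => ⟨i, hi⟩, fun ⟨i, hi⟩ => ⟨i + 1, i, i.lt_succ_self, hi⟩⟩

theorem exists_eventually_le_of_mk_lt_boundNum {ι : Type u}
    (hι : Cardinal.mk ι < Cardinal.lift.{u} boundNum) (f : ι → ℕ → ℕ) :
    ∃ g : ℕ → ℕ, ∀ i, ∀ᶠ n in atTop, f i n ≤ g n := by
  by_contra hunbdd
  have hle : boundNum ≤ Cardinal.mk (range f) :=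
    csInf_le' ⟨range f, rfl, fun ⟨g, hg⟩ => hunbdd ⟨g, fun i => hg _ ⟨i, rfl⟩⟩⟩
  have hrange : Cardinal.lift.{u} (Cardinal.mk (range f)) ≤ Cardinal.mk ι := by
    simpa using Cardinal.mk_range_le_lift (f := f)
  exact (Cardinal.lift_lt.mp (hrange.trans_lt hι)).not_ge hle

theorem exists_finset_eventually_mem_star (hcard : Cardinal.mk X < Cardinal.lift.{u} boundNum)
    {U : ℕ → Set (Set X)} {C : ℕ → Set X} (hC : ∀ n, (C n).Countable)
    (hcov : ∀ x : X, ∀ᶠ n in atTop, x ∈ star (C n) (U n)) :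
    ∃ F : ℕ → Finset X, (∀ n, ↑(F n) ⊆ C n) ∧ ∀ x : X, ∀ᶠ n in atTop, x ∈ star (↑(F n)) (U n) := by
  choose F hFmono hFC using fun n => (hC n).exists_monotone_finset_iUnion_eq
  have hstage : ∀ x n, ∃ k, x ∈ star (C n) (U n) → x ∈ star (↑(F n k)) (U n) := by
    intro x n
    by_cases hx : x ∈ star (C n) (U n)
    · rw [← hFC n, star_iUnion, mem_iUnion] at hx
      exact hx.imp fun _ hk _ => hk
    · exact ⟨0, fun h => absurd h hx⟩
  choose k hk using hstage
  obtain ⟨g, hg⟩ := exists_eventually_le_of_mk_lt_boundNum hcard k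
  refine ⟨fun n => F n (g n), fun n => hFC n ▸ subset_iUnion (fun j => (F n j : Set X)) (g n),
    fun x => ?_⟩
  filter_upwards [hcov x, hg x] with n hxn hkn
  exact star_mono (Finset.coe_subset.mpr (hFmono n hkn)) _ (hk x n hxn)

theorem stmt13 {X : Type u} [TopologicalSpace X]
    (hext : CountableExtent X) (hcard : Cardinal.mk X < Cardinal.lift.{u} boundNum)
    (h : SelSScdOGamma X) : SelStronglyStarHurewicz X := by
  intro U hU D hD
  obtain ⟨C, hC, hcov⟩ := h U hU D hD
  obtain ⟨F, hFC, hF⟩ := exists_finset_eventually_mem_star hcard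
    (fun n => hext (C n) (hC n).2.1 (hC n).2.2) hcov
  exact ⟨F, fun n => (hFC n).trans (hC n).1, hF⟩
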